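/- arXiv:1008.4911 — 2 statements merged into one kernel-verified Lean document; each statement's English description precedes it below -/
import Mathlib

section
/- Derivative formulas for Cayley-trigonometric functions on hℤ: with Cos, Sin as defined, (Cos(n+1) - Cos(n))/h = -ω·(Sin(n) + Sin(n+1))/2 and (Sin(n+1) - Sin(n))/h = ω·(Cos(n) + Cos(n+1))/2. -/
/-! With `c = i h ω / 2`, the Cayley multiplier `z = (1 + c) / (1 - c)` satisfies
`z - 1 = c (1 + z)`, so `n ↦ zⁿ` solves the trapezoidal (Crank–Nicolson) discretisation
`u (n + 1) - u n = c (u n + u (n + 1))` of `u' = i ω u`, and `n ↦ z⁻ⁿ` solves it with `-c`.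
Taking the half-sum and half-difference of these two recurrences gives the formulas for
`Cos` and `Sin`. -/

theorem cayley_zpow_succ_sub {K : Type*} [Field K] {c : K} (hp : 1 + c ≠ 0) (hm : 1 - c ≠ 0)
    (n : ℤ) :
    ((1 + c) / (1 - c)) ^ (n + 1) - ((1 + c) / (1 - c)) ^ n =
      c * (((1 + c) / (1 - c)) ^ n + ((1 + c) / (1 - c)) ^ (n + 1)) := by
  rw [zpow_add_one₀ (div_ne_zero hp hm)]
  field_simp
  ring

theorem cayley_inv_zpow_succ_sub {K : Type*} [Field K] {c : K} (hp : 1 + c ≠ 0) (hm : 1 - c ≠ 0)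
    (n : ℤ) :
    ((1 - c) / (1 + c)) ^ (n + 1) - ((1 - c) / (1 + c)) ^ n =
      -c * (((1 - c) / (1 + c)) ^ n + ((1 - c) / (1 + c)) ^ (n + 1)) := by
  simpa only [← sub_eq_add_neg, sub_neg_eq_add] using
    cayley_zpow_succ_sub (c := -c) (by rwa [← sub_eq_add_neg]) (by rwa [sub_neg_eq_add]) n

theorem Complex.one_add_ne_zero_of_re_eq_zero {z : ℂ} (hz : z.re = 0) : 1 + z ≠ 0 :=
  fun h0 => by simpa [hz] using congrArg Complex.re h0

theorem Complex.one_sub_ne_zero_of_re_eq_zero {z : ℂ} (hz : z.re = 0) : 1 - z ≠ 0 :=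
  fun h0 => by simpa [hz] using congrArg Complex.re h0

open Complex in
theorem cayley_trig_derivatives (h : ℝ) (hh : 0 < h) (ω : ℝ)
    (E : ℤ → ℂ) (E' : ℤ → ℂ)
    (hE : ∀ n : ℤ, E n = ((1 + I * h * ω / 2) / (1 - I * h * ω / 2)) ^ n)
    (hE' : ∀ n : ℤ, E' n = ((1 - I * h * ω / 2) / (1 + I * h * ω / 2)) ^ n)
    (Cos Sin : ℤ → ℂ)
    (hCos : ∀ n : ℤ, Cos n = (E n + E' n) / 2)
    (hSin : ∀ n : ℤ, Sin n = (E n - E' n) / (2 * I)) (n : ℤ) :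
    (Cos (n + 1) - Cos n) / h = -ω * (Sin n + Sin (n + 1)) / 2 ∧
      (Sin (n + 1) - Sin n) / h = ω * (Cos n + Cos (n + 1)) / 2 := by
  have hre : (I * h * ω / 2).re = 0 := by simp
  have hp := one_add_ne_zero_of_re_eq_zero hre
  have hm := one_sub_ne_zero_of_re_eq_zero hre
  have hstep : E (n + 1) - E n = I * h * ω / 2 * (E n + E (n + 1)) := by
    simpa only [← hE] using cayley_zpow_succ_sub hp hm n
  have hstep' : E' (n + 1) - E' n = -(I * h * ω / 2) * (E' n + E' (n + 1)) := by
    simpa only [← hE'] using cayley_inv_zpow_succ_sub hp hm n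
  have hh' : (h : ℂ) ≠ 0 := by exact_mod_cast hh.ne'
  simp only [hCos, hSin]
  constructor
  · field_simp
    linear_combination
      2 * I * (hstep + hstep') + h * ω * (E n + E (n + 1) - E' n - E' (n + 1)) * I_sq
  · field_simp
    linear_combination 2 * (hstep - hstep')
end

section
/- The Cayley-discretized harmonic oscillator has bounded solutions: for h > 0, ω₀ ∈ ℝ, any sequence q : ℤ → ℝ satisfying (q(n+2) - 2q(n+1) + q(n))/h² + ω₀²·(q(n+2) + 2q(n+1) + q(n))/4 = 0 is bounded. -/
/-!
Clearing denominators, the scheme is the three-term recurrence `q (n + 2) = c q (n + 1) - q n`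
with `c = 2 (4 - ω₀² h²) / (4 + ω₀² h²)`, and `|c| < 2` because `ω₀ h ≠ 0`. For such `c` the
quadratic form `x² + y² - c x y` is positive definite, and evaluated at `(q (n + 1), q n)` it is
a conserved discrete energy, which therefore bounds `q`.
-/

def recurrenceEnergy {R : Type*} [CommRing R] (c x y : R) : R := x ^ 2 + y ^ 2 - c * x * y

theorem recurrenceEnergy_eq_of_recurrence {R : Type*} [CommRing R] {c : R} {q : ℤ → R}
    (hq : ∀ n, q (n + 2) = c * q (n + 1) - q n) (n : ℤ) :
    recurrenceEnergy c (q (n + 1)) (q n) = recurrenceEnergy c (q 1) (q 0) := by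
  have hstep : Function.Periodic (fun n => recurrenceEnergy c (q (n + 1)) (q n)) 1 := by
    intro n
    simp only [recurrenceEnergy, add_assoc, one_add_one_eq_two, hq]
    ring
  simpa using hstep.int_mul_eq n

theorem mul_add_sq_le_recurrenceEnergy (c x y : ℝ) :
    (1 - |c| / 2) * (x ^ 2 + y ^ 2) ≤ recurrenceEnergy c x y := by
  have hcross : c * x * y ≤ |c| * (|x| * |y|) := by
    calc c * x * y ≤ |c * x * y| := le_abs_self _
      _ = |c| * (|x| * |y|) := by rw [abs_mul, abs_mul, mul_assoc]
  have hamgm : 2 * |x| * |y| ≤ x ^ 2 + y ^ 2 := by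
    simpa only [sq_abs] using two_mul_le_add_sq |x| |y|
  unfold recurrenceEnergy
  nlinarith [abs_nonneg c]

theorem exists_abs_le_of_recurrence {c : ℝ} (hc : |c| < 2) {q : ℤ → ℝ}
    (hq : ∀ n, q (n + 2) = c * q (n + 1) - q n) : ∃ M, ∀ n, |q n| ≤ M := by
  have hpos : 0 < 1 - |c| / 2 := by linarith
  refine ⟨√(recurrenceEnergy c (q 1) (q 0) / (1 - |c| / 2)), fun n => Real.abs_le_sqrt ?_⟩
  rw [le_div_iff₀ hpos, ← recurrenceEnergy_eq_of_recurrence hq n]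
  nlinarith [mul_add_sq_le_recurrenceEnergy c (q (n + 1)) (q n), sq_nonneg (q (n + 1))]

/-- The Cayley transform maps `b / a > 0` into the open unit interval `(-1, 1)`. -/
theorem abs_two_mul_sub_div_add_lt_two {a b : ℝ} (ha : 0 < a) (hb : 0 < b) :
    |2 * (a - b) / (a + b)| < 2 := by
  rw [abs_div, abs_of_pos (add_pos ha hb), div_lt_iff₀ (add_pos ha hb), abs_lt]
  constructor <;> linarith

theorem cayley_oscillator_bounded (h : ℝ) (hh : 0 < h) (ω₀ : ℝ) (hω : ω₀ ≠ 0)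
    (q : ℤ → ℝ)
    (hq : ∀ n : ℤ, (q (n + 2) - 2 * q (n + 1) + q n) / h ^ 2 +
      ω₀ ^ 2 * (q (n + 2) + 2 * q (n + 1) + q n) / 4 = 0) :
    ∃ M : ℝ, ∀ n : ℤ, |q n| ≤ M := by
  have hs : 0 < ω₀ ^ 2 * h ^ 2 := by positivity
  refine exists_abs_le_of_recurrence (abs_two_mul_sub_div_add_lt_two four_pos hs) fun n => ?_
  have hn := hq n
  field_simp at hn ⊢
  linear_combination hn
end
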